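/- The function F(b) = φ(b)/Φ(−b) − b tends to 0 as b tends to +∞; that is, lim_{b→∞} F(b) = 0. -/

import Mathlib

open MeasureTheory Filter

/-- Standard normal density. -/
noncomputable def phi (x : ℝ) : ℝ := Real.exp (-x ^ 2 / 2) / Real.sqrt (2 * Real.pi)

/-- Standard normal cumulative distribution function. -/
noncomputable def Phi (x : ℝ) : ℝ := ∫ t in Set.Iio x, phi t

/-- Mills-type ratio. -/
noncomputable def r (b : ℝ) : ℝ := phi b / Phi (-b)

/-- The deficit transformation `F`. -/
noncomputable def F (b : ℝ) : ℝ := phi b / Phi (-b) - b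

/-!
Write `Q(b) = Φ(-b) = ∫_b^∞ φ`. Since `φ' = -t φ`, integrating `b φ(t) ≤ t φ(t)` over `(b, ∞)`
gives `b Q(b) ≤ φ(b)`, while `-(t φ(t) / (t² + 1))` has derivative `(1 - 2 / (t² + 1)²) φ(t) ≤ φ(t)`,
which gives Gordon's bound `b φ(b) / (b² + 1) ≤ Q(b)`. Hence `0 ≤ F(b) ≤ 1 / b` for `b ≥ 1`.
-/

open Set

lemma phi_pos (x : ℝ) : 0 < phi x := by
  unfold phi; positivity

lemma phi_neg (x : ℝ) : phi (-x) = phi x := by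
  simp [phi]

lemma hasDerivAt_phi (x : ℝ) : HasDerivAt phi (-x * phi x) x :=
  (((hasDerivAt_pow 2 x).fun_neg.div_const 2).exp.div_const (Real.sqrt (2 * Real.pi))).congr_deriv
    (by simp only [phi]; push_cast; ring)

lemma tendsto_phi_atTop : Tendsto phi atTop (nhds 0) := by
  have hsq : Tendsto (fun x : ℝ => -x ^ 2 / 2) atTop atBot :=
    (tendsto_neg_atBot_iff.2 (tendsto_pow_atTop two_ne_zero)).atBot_div_const two_pos
  have h := (Real.tendsto_exp_atBot.comp hsq).div_const (Real.sqrt (2 * Real.pi))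
  rwa [zero_div] at h

lemma integrable_phi : Integrable phi := by
  convert (integrable_exp_neg_mul_sq (b := 1 / 2) one_half_pos).div_const
    (Real.sqrt (2 * Real.pi)) using 2 with x
  unfold phi; ring_nf

lemma Phi_pos (x : ℝ) : 0 < Phi x := by
  rw [Phi, setIntegral_pos_iff_support_of_nonneg_ae (Eventually.of_forall fun t => (phi_pos t).le)
    integrable_phi.integrableOn]
  simp [Function.support_eq_univ fun t => (phi_pos t).ne']

lemma Phi_neg (b : ℝ) : Phi (-b) = ∫ t in Ioi b, phi t := by
  rw [Phi, ← integral_Iic_eq_integral_Iio, ← integral_comp_neg_Ioi]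
  simp only [phi_neg]

lemma mul_Phi_neg_le_phi {b : ℝ} (hb : 0 ≤ b) : b * Phi (-b) ≤ phi b := by
  have hderiv : ∀ x ∈ Ici b, HasDerivAt (fun t => -phi t) (x * phi x) x := fun x _ => by
    simpa using (hasDerivAt_phi x).fun_neg
  have hnonneg : ∀ x ∈ Ioi b, 0 ≤ x * phi x := fun x hx =>
    mul_nonneg (hb.trans hx.out.le) (phi_pos x).le
  have hlim : Tendsto (fun t => -phi t) atTop (nhds 0) := by
    simpa using tendsto_phi_atTop.neg
  calc b * Phi (-b) = ∫ t in Ioi b, b * phi t := by rw [Phi_neg, integral_const_mul]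
    _ ≤ ∫ t in Ioi b, t * phi t :=
        setIntegral_mono_on (integrable_phi.integrableOn.const_mul b)
          (integrableOn_Ioi_deriv_of_nonneg' hderiv hnonneg hlim) measurableSet_Ioi
          fun x hx => mul_le_mul_of_nonneg_right hx.out.le (phi_pos x).le
    _ = phi b := by rw [integral_Ioi_of_hasDerivAt_of_nonneg' hderiv hnonneg hlim]; ring

lemma hasDerivAt_div_sq_add_one_mul_phi (x : ℝ) :
    HasDerivAt (fun t => -(t / (t ^ 2 + 1) * phi t)) ((1 - 2 / (x ^ 2 + 1) ^ 2) * phi x) x := by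
  have hquot := (hasDerivAt_id' x).fun_div ((hasDerivAt_pow 2 x).add_const 1) (by positivity)
  refine (hquot.fun_mul (hasDerivAt_phi x)).fun_neg.congr_deriv ?_
  field_simp
  ring

lemma tendsto_div_sq_add_one_mul_phi :
    Tendsto (fun t => -(t / (t ^ 2 + 1) * phi t)) atTop (nhds 0) := by
  refine squeeze_zero_norm (fun t => ?_) tendsto_phi_atTop
  have hle : |t / (t ^ 2 + 1)| ≤ 1 := by
    rw [abs_div, abs_of_pos (by positivity : (0 : ℝ) < t ^ 2 + 1), div_le_one (by positivity)]
    nlinarith [sq_nonneg (|t| - 1), sq_abs t]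
  rw [norm_neg, Real.norm_eq_abs, abs_mul, abs_of_pos (phi_pos t)]
  exact mul_le_of_le_one_left (phi_pos t).le hle

lemma div_sq_add_one_mul_phi_le_Phi_neg {b : ℝ} (hb : 1 ≤ b) :
    b / (b ^ 2 + 1) * phi b ≤ Phi (-b) := by
  have hderiv := fun x (_ : x ∈ Ici b) => hasDerivAt_div_sq_add_one_mul_phi x
  have hnonneg : ∀ x ∈ Ioi b, 0 ≤ (1 - 2 / (x ^ 2 + 1) ^ 2) * phi x := fun x hx => by
    have hx : 1 ≤ x := hb.trans hx.out.le
    have h2 : 2 / (x ^ 2 + 1) ^ 2 ≤ 1 := by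
      rw [div_le_one (by positivity)]; nlinarith
    exact mul_nonneg (sub_nonneg.2 h2) (phi_pos x).le
  calc b / (b ^ 2 + 1) * phi b = ∫ t in Ioi b, (1 - 2 / (t ^ 2 + 1) ^ 2) * phi t := by
        rw [integral_Ioi_of_hasDerivAt_of_nonneg' hderiv hnonneg tendsto_div_sq_add_one_mul_phi]
        ring
    _ ≤ ∫ t in Ioi b, phi t :=
        setIntegral_mono_on (integrableOn_Ioi_deriv_of_nonneg' hderiv hnonneg
            tendsto_div_sq_add_one_mul_phi) integrable_phi.integrableOn measurableSet_Ioi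
          fun x _ => mul_le_of_le_one_left (phi_pos x).le (sub_le_self _ (by positivity))
    _ = Phi (-b) := (Phi_neg b).symm

lemma F_nonneg {b : ℝ} (hb : 0 ≤ b) : 0 ≤ F b := by
  rw [F, sub_nonneg, le_div_iff₀ (Phi_pos _)]
  exact mul_Phi_neg_le_phi hb

lemma F_le_inv {b : ℝ} (hb : 1 ≤ b) : F b ≤ b⁻¹ := by
  have hb0 : 0 < b := one_pos.trans_le hb
  rw [F, sub_le_iff_le_add, div_le_iff₀ (Phi_pos _)]
  calc phi b = (b⁻¹ + b) * (b / (b ^ 2 + 1) * phi b) := by field_simp; ring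
    _ ≤ (b⁻¹ + b) * Phi (-b) := by gcongr; exact div_sq_add_one_mul_phi_le_Phi_neg hb

/-- `F(b) → 0` as `b → ∞`. -/
theorem F_tendsto_atTop : Tendsto F atTop (nhds 0) :=
  tendsto_of_tendsto_of_tendsto_of_le_of_le' tendsto_const_nhds tendsto_inv_atTop_zero
    ((eventually_ge_atTop 0).mono fun _ => F_nonneg) ((eventually_ge_atTop 1).mono fun _ => F_le_inv)
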